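/- arXiv:2110.09332 — 9 statements merged into one kernel-verified Lean document; each statement's English description precedes it below -/
import Mathlib

section
/- Let d be a metric on a finite set V, and for a finite set X define div(X) = Σ_{{u,v} ⊆ X, u ≠ v} d(u,v). Then for any two disjoint finite subsets X and Y of V, (|X| − 1) · div(X, Y) ≥ |Y| · div(X), where div(X, Y) = Σ_{u ∈ X, v ∈ Y} d(u,v). -/
/-- Sum of pairwise distances within `X` (each unordered pair counted once). -/
noncomputable def sumDiv {α : Type*} (d : α → α → ℝ) (X : Finset α) : ℝ :=
  (∑ u ∈ X, ∑ v ∈ X, d u v) / 2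

/-- Sum of distances between `X` and `Y`. -/
noncomputable def crossDiv {α : Type*} (d : α → α → ℝ) (X Y : Finset α) : ℝ :=
  ∑ u ∈ X, ∑ v ∈ Y, d u v

theorem metric_disjoint_div_bound {α : Type*} [DecidableEq α]
    (d : α → α → ℝ)
    (hsymm : ∀ u v, d u v = d v u)
    (hnonneg : ∀ u v, 0 ≤ d u v)
    (hself : ∀ v, d v v = 0)
    (htri : ∀ u v w, d u w ≤ d u v + d v w)
    (X Y : Finset α) (hdisj : Disjoint X Y) :
    ((X.card : ℝ) - 1) * crossDiv d X Y ≥ (Y.card : ℝ) * sumDiv d X := by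
  have key : ∀ y : α, (∑ u ∈ X, ∑ v ∈ X, d u v)
      ≤ 2 * ((X.card : ℝ) - 1) * ∑ u ∈ X, d u y := by
    intro y
    have step1 : (∑ u ∈ X, ∑ v ∈ X, d u v)
        ≤ ∑ u ∈ X, ∑ v ∈ X, (if u = v then 0 else d u y + d y v) := by
      apply Finset.sum_le_sum
      intro u _
      apply Finset.sum_le_sum
      intro v _
      by_cases h : u = v
      · simp [h, hself]
      · simp only [h, if_false]
        exact htri u y v
    have step2 : ∀ u ∈ X, (∑ v ∈ X, (if u = v then 0 else d u y + d y v))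
        = ((X.card : ℝ) - 1) * d u y + (∑ v ∈ X, d y v) - d y u := by
      intro u hu
      have h1 : (∑ v ∈ X, (if u = v then 0 else d u y + d y v))
          = ∑ v ∈ X.erase u, (d u y + d y v) := by
        rw [← Finset.add_sum_erase _ (fun v => if u = v then 0 else d u y + d y v) hu]
        rw [if_pos rfl, zero_add]
        exact Finset.sum_congr rfl fun v hv =>
          if_neg (fun h : u = v => (Finset.mem_erase.1 hv).1 h.symm)
      have h2 : ∑ v ∈ X.erase u, d y v = (∑ v ∈ X, d y v) - d y u :=
        Finset.sum_erase_eq_sub hu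
      have h3 : ((X.erase u).card : ℝ) = (X.card : ℝ) - 1 := by
        rw [Finset.card_erase_of_mem hu,
          Nat.cast_sub (Finset.card_pos.2 ⟨u, hu⟩), Nat.cast_one]
      rw [h1, Finset.sum_add_distrib, Finset.sum_const, nsmul_eq_mul, h2, h3]
      ring
    rw [Finset.sum_congr rfl step2] at step1
    have hS : (∑ v ∈ X, d y v) = ∑ u ∈ X, d u y := by
      exact Finset.sum_congr rfl fun v _ => hsymm y v
    calc (∑ u ∈ X, ∑ v ∈ X, d u v)
        ≤ ∑ u ∈ X, (((X.card : ℝ) - 1) * d u y + (∑ v ∈ X, d y v) - d y u) := step1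
      _ = 2 * ((X.card : ℝ) - 1) * ∑ u ∈ X, d u y := by
          simp only [Finset.sum_sub_distrib, Finset.sum_add_distrib,
            Finset.sum_const, nsmul_eq_mul, ← Finset.mul_sum, hS]
          ring
  rw [ge_iff_le, sumDiv, crossDiv]
  have hcross : (∑ u ∈ X, ∑ v ∈ Y, d u v) = ∑ y ∈ Y, ∑ u ∈ X, d u y :=
    Finset.sum_comm
  rw [hcross]
  have : (Y.card : ℝ) * ((∑ u ∈ X, ∑ v ∈ X, d u v) / 2)
      = ∑ y ∈ Y, (∑ u ∈ X, ∑ v ∈ X, d u v) / 2 := by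
    rw [Finset.sum_const, nsmul_eq_mul]
  rw [this, Finset.mul_sum]
  apply Finset.sum_le_sum
  intro y _
  have := key y
  linarith
end

section
/- Let d satisfy the α-relaxed triangle inequality α·(d(u,v) + d(v,w)) ≥ d(u,w) for all u,v,w, where α ≥ 1, and be symmetric and nonnegative with d(v,v)=0. Then for any two disjoint finite subsets X and Y of V, α · (|X| − 1) · div(X, Y) ≥ |Y| · div(X), where div and div(·,·) denote the sum of pairwise (resp. cross) distances. -/
lemma relaxed_key {α : Type*} [DecidableEq α]
    (d : α → α → ℝ) (a : ℝ)
    (hsymm : ∀ u v, d u v = d v u)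
    (hself : ∀ v, d v v = 0)
    (htri : ∀ u v w, d u w ≤ a * (d u v + d v w))
    (X : Finset α) (y : α) :
    ∑ u ∈ X, ∑ w ∈ X, d u w ≤ 2 * a * ((X.card : ℝ) - 1) * ∑ u ∈ X, d u y := by
  calc ∑ u ∈ X, ∑ w ∈ X, d u w
      = ∑ u ∈ X, ∑ w ∈ X.erase u, d u w := by
        refine Finset.sum_congr rfl fun u hu => ?_
        rw [← Finset.add_sum_erase X _ hu, hself, zero_add]
    _ ≤ ∑ u ∈ X, ∑ w ∈ X.erase u, a * (d u y + d y w) :=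
        Finset.sum_le_sum fun u _ => Finset.sum_le_sum fun w _ => htri u y w
    _ = ∑ u ∈ X, a * (((X.card : ℝ) - 1) * d u y + ((∑ w ∈ X, d y w) - d y u)) := by
        refine Finset.sum_congr rfl fun u hu => ?_
        rw [← Finset.mul_sum, Finset.sum_add_distrib, Finset.sum_const, nsmul_eq_mul,
            Finset.card_erase_of_mem hu, Finset.sum_erase_eq_sub hu,
            Nat.cast_sub (Finset.one_le_card.mpr ⟨u, hu⟩), Nat.cast_one]
    _ = 2 * a * ((X.card : ℝ) - 1) * ∑ u ∈ X, d u y := by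
        simp only [hsymm y]
        rw [← Finset.mul_sum, Finset.sum_add_distrib, ← Finset.mul_sum,
            Finset.sum_sub_distrib, Finset.sum_const, nsmul_eq_mul]
        ring

theorem relaxed_metric_disjoint_div_bound {α : Type*} [DecidableEq α]
    (d : α → α → ℝ) (a : ℝ) (ha : 1 ≤ a)
    (hsymm : ∀ u v, d u v = d v u)
    (hnonneg : ∀ u v, 0 ≤ d u v)
    (hself : ∀ v, d v v = 0)
    (htri : ∀ u v w, d u w ≤ a * (d u v + d v w))
    (X Y : Finset α) (hdisj : Disjoint X Y) :
    a * ((X.card : ℝ) - 1) * crossDiv d X Y ≥ (Y.card : ℝ) * sumDiv d X := by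
  rw [ge_iff_le, sumDiv, crossDiv]
  have h : (Y.card : ℝ) * ∑ u ∈ X, ∑ w ∈ X, d u w
      ≤ 2 * a * ((X.card : ℝ) - 1) * ∑ y ∈ Y, ∑ u ∈ X, d u y := by
    calc (Y.card : ℝ) * ∑ u ∈ X, ∑ w ∈ X, d u w
        = ∑ _y ∈ Y, ∑ u ∈ X, ∑ w ∈ X, d u w := by
          rw [Finset.sum_const, nsmul_eq_mul]
      _ ≤ ∑ y ∈ Y, 2 * a * ((X.card : ℝ) - 1) * ∑ u ∈ X, d u y :=
          Finset.sum_le_sum fun y _ => relaxed_key d a hsymm hself htri X y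
      _ = 2 * a * ((X.card : ℝ) - 1) * ∑ y ∈ Y, ∑ u ∈ X, d u y := by
          rw [Finset.mul_sum]
  have hc : ∑ y ∈ Y, ∑ u ∈ X, d u y = ∑ u ∈ X, ∑ v ∈ Y, d u v := Finset.sum_comm
  rw [hc] at h
  linarith
end

section
/- Let d be a metric on V, k ≥ 2, x* a subset of V with |x*| = k, and x a subset with |x| < k. Then div(x* \ x, x) ≥ (|x| · |x* \ x| / (k(k−1))) · div(x*), where div(X) is the sum of pairwise distances in X and div(X,Y) the sum of cross distances. -/
lemma key_ineq {α : Type*} (d : α → α → ℝ)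
    (hsymm : ∀ u v, d u v = d v u)
    (hself : ∀ v, d v v = 0)
    (htri : ∀ u v w, d u w ≤ d u v + d v w)
    (X Y : Finset α) :
    (Y.card : ℝ) * sumDiv d X ≤ ((X.card : ℝ) - 1) * crossDiv d X Y := by
  have main : ∀ u ∈ X, (∑ y ∈ Y, 2 * d u y) ≤ ∑ v ∈ X, ∑ y ∈ Y, (d u y + d y v - d u v) := by
    intro u hu
    have h := Finset.single_le_sum (f := fun v => ∑ y ∈ Y, (d u y + d y v - d u v))
      (fun v _ => Finset.sum_nonneg (fun y _ => by have := htri u y v; linarith)) hu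
    calc ∑ y ∈ Y, 2 * d u y = ∑ y ∈ Y, (d u y + d y u - d u u) := by
          apply Finset.sum_congr rfl; intro y _; rw [hself, hsymm y u]; ring
      _ ≤ _ := h
  have S1 : ∑ u ∈ X, ∑ y ∈ Y, 2 * d u y ≤
      ∑ u ∈ X, ∑ v ∈ X, ∑ y ∈ Y, (d u y + d y v - d u v) :=
    Finset.sum_le_sum main
  have E1 : ∑ u ∈ X, ∑ y ∈ Y, 2 * d u y = 2 * crossDiv d X Y := by
    simp [crossDiv, Finset.mul_sum]
  have E2 : ∑ u ∈ X, ∑ v ∈ X, ∑ y ∈ Y, (d u y + d y v - d u v)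
      = (X.card : ℝ) * crossDiv d X Y + (X.card : ℝ) * crossDiv d X Y
        - (Y.card : ℝ) * (2 * sumDiv d X) := by
    have hswap : ∑ v ∈ X, ∑ y ∈ Y, d y v = crossDiv d X Y := by
      rw [crossDiv]
      exact Finset.sum_congr rfl (fun v _ => Finset.sum_congr rfl (fun y _ => hsymm y v))
    have : ∀ u ∈ X, ∑ v ∈ X, ∑ y ∈ Y, (d u y + d y v - d u v)
        = (X.card : ℝ) * (∑ y ∈ Y, d u y) + crossDiv d X Y - (Y.card : ℝ) * ∑ v ∈ X, d u v := by
      intro u hu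
      rw [← hswap]
      simp [Finset.sum_add_distrib, Finset.sum_sub_distrib, Finset.sum_const, Finset.mul_sum,
        mul_comm]
      rw [← Finset.sum_mul]
    rw [Finset.sum_congr rfl this]
    simp [Finset.sum_add_distrib, Finset.sum_sub_distrib, Finset.sum_const, crossDiv, sumDiv,
      Finset.mul_sum]
    rw [mul_div_cancel₀ _ (two_ne_zero), Finset.mul_sum]
    exact Finset.sum_congr rfl fun u _ => (Finset.mul_sum _ _ _).symm
  rw [E1, E2] at S1
  linarith

lemma arith_cert (a s t m K C D sA sS : ℝ)
    (ha : 1 ≤ a) (hs : 0 ≤ s) (ht : 0 ≤ t)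
    (haK : a + s = K) (hm : s + t = m) (hmK : m + 1 ≤ K) (hK : 2 ≤ K)
    (nC : 0 ≤ C) (nD : 0 ≤ D) (nsA : 0 ≤ sA) (nsS : 0 ≤ sS)
    (i1 : s * sA ≤ (a - 1) * C) (i2 : t * sA ≤ (a - 1) * D)
    (i3 : a * sS ≤ (s - 1) * C) :
    m * a * (sA + sS + C) ≤ (C + D) * (K * (K - 1)) := by
  subst haK; subst hm
  have hm0 : 0 ≤ s + t := by linarith
  rcases eq_or_lt_of_le ha with heq | hlt
  · -- a = 1
    have ha' : a = 1 := heq.symm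
    subst ha'
    have ht0 : t = 0 := by linarith
    subst ht0
    have hsA : sA = 0 := by nlinarith [i1]
    rw [hsA]
    nlinarith [mul_le_mul_of_nonneg_left i3 hs, mul_nonneg hs nC,
      mul_nonneg (mul_nonneg (by linarith : (0:ℝ) ≤ 1 + s) hs) nD]
  · -- a > 1
    have ha1 : 0 < a - 1 := by linarith
    have h1 := mul_le_mul_of_nonneg_left i1
      (by nlinarith : (0:ℝ) ≤ (a + s - 1) * (a + s - (s + t)))
    have h2 := mul_le_mul_of_nonneg_left i2
      (by nlinarith : (0:ℝ) ≤ (a + s) * (a + s - 1))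
    have h3 := mul_le_mul_of_nonneg_left i3
      (by nlinarith : (0:ℝ) ≤ (s + t) * (a - 1))
    have h4 : 0 ≤ (s + t) * a * s * sA := by positivity
    have key : 0 ≤ (a - 1) *
        ((C + D) * ((a + s) * (a + s - 1)) - (s + t) * a * (sA + sS + C)) := by
      nlinarith [h1, h2, h3, h4]
    nlinarith [key, ha1]

theorem cross_div_lower_bound {α : Type*} [DecidableEq α]
    (d : α → α → ℝ)
    (hsymm : ∀ u v, d u v = d v u)
    (hnonneg : ∀ u v, 0 ≤ d u v)
    (hself : ∀ v, d v v = 0)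
    (htri : ∀ u v w, d u w ≤ d u v + d v w)
    (k : ℕ) (hk : 2 ≤ k)
    (xs x : Finset α) (hxs : xs.card = k) (hx : x.card < k) :
    crossDiv d (xs \ x) x ≥
      ((x.card : ℝ) * ((xs \ x).card : ℝ) / ((k : ℝ) * ((k : ℝ) - 1))) * sumDiv d xs := by
  classical
  set A := xs \ x with hAdef
  set S := xs ∩ x with hSdef
  set T := x \ xs with hTdef
  have hAS : Disjoint A S := Finset.sdiff_disjoint.mono_right Finset.inter_subset_right
  have hASu : A ∪ S = xs := by
    rw [hAdef, hSdef, Finset.sdiff_union_inter]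
  have hST : Disjoint S T :=
    (Finset.sdiff_disjoint.mono_right Finset.inter_subset_left).symm
  have hSTu : S ∪ T = x := by
    rw [hSdef, hTdef, Finset.inter_comm, Finset.union_comm, Finset.sdiff_union_inter]
  have hcardA : A.card + S.card = k := by
    rw [← Finset.card_union_of_disjoint hAS, hASu, hxs]
  have hcardx : S.card + T.card = x.card := by
    rw [← Finset.card_union_of_disjoint hST, hSTu]
  have hSA : crossDiv d S A = crossDiv d A S := by
    rw [crossDiv, crossDiv, Finset.sum_comm]
    exact Finset.sum_congr rfl fun v _ => Finset.sum_congr rfl fun u _ => hsymm u v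
  have hcross : crossDiv d A x = crossDiv d A S + crossDiv d A T := by
    rw [crossDiv, ← hSTu]
    simp [crossDiv, Finset.sum_union hST, Finset.sum_add_distrib]
  have hsum : sumDiv d xs = sumDiv d A + sumDiv d S + crossDiv d A S := by
    rw [sumDiv, ← hASu, Finset.sum_union hAS]
    simp_rw [Finset.sum_union hAS]
    rw [Finset.sum_add_distrib, Finset.sum_add_distrib]
    have h' : ∑ u ∈ S, ∑ v ∈ A, d u v = ∑ u ∈ A, ∑ v ∈ S, d u v := hSA
    rw [h', sumDiv, sumDiv, crossDiv]
    ring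
  have i1 := key_ineq d hsymm hself htri A S
  have i2 := key_ineq d hsymm hself htri A T
  have i3 := key_ineq d hsymm hself htri S A
  rw [hSA] at i3
  have nC : 0 ≤ crossDiv d A S :=
    Finset.sum_nonneg fun u _ => Finset.sum_nonneg fun v _ => hnonneg u v
  have nD : 0 ≤ crossDiv d A T :=
    Finset.sum_nonneg fun u _ => Finset.sum_nonneg fun v _ => hnonneg u v
  have nsA : 0 ≤ sumDiv d A := by
    rw [sumDiv]
    exact div_nonneg
      (Finset.sum_nonneg fun u _ => Finset.sum_nonneg fun v _ => hnonneg u v) two_pos.le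
  have nsS : 0 ≤ sumDiv d S := by
    rw [sumDiv]
    exact div_nonneg
      (Finset.sum_nonneg fun u _ => Finset.sum_nonneg fun v _ => hnonneg u v) two_pos.le
  have hK2 : (2:ℝ) ≤ (k:ℝ) := by exact_mod_cast hk
  have hkpos : (0:ℝ) < (k:ℝ) * ((k:ℝ) - 1) := by nlinarith
  rw [ge_iff_le, hsum, hcross, div_mul_eq_mul_div, div_le_iff₀ hkpos]
  rcases Nat.eq_zero_or_pos A.card with h0 | h1
  · have hAe : A = ∅ := Finset.card_eq_zero.mp h0
    simp [hAe, crossDiv, sumDiv, h0]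
  · have ha : (1:ℝ) ≤ (A.card:ℝ) := by exact_mod_cast h1
    have haK : (A.card:ℝ) + (S.card:ℝ) = (k:ℝ) := by exact_mod_cast hcardA
    have hmx : (S.card:ℝ) + (T.card:ℝ) = (x.card:ℝ) := by exact_mod_cast hcardx
    have hmK : (x.card:ℝ) + 1 ≤ (k:ℝ) := by exact_mod_cast hx
    exact arith_cert (A.card) (S.card) (T.card) (x.card) (k)
      (crossDiv d A S) (crossDiv d A T) (sumDiv d A) (sumDiv d S)
      ha (Nat.cast_nonneg _) (Nat.cast_nonneg _) haK hmx hmK hK2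
      nC nD nsA nsS i1 i2 i3
end

section
/- Let f : 2^V → ℝ≥0 be monotone submodular with f(∅)=0, d a metric on V, div the sum-diversity, λ ≥ 0, k ≥ 2, and x* an optimal size-k subset. For any x ⊆ V with |x| < k, there exists an item v ∉ x such that f(x ∪ {v})/2 + λ·div(x ∪ {v}) − f(x)/2 − λ·div(x) ≥ (f(x*) − f(x))/(2k) + (λ|x|/(k(k−1)))·div(x*). -/
section Aux

open Finset

private lemma route_sum_aux {α : Type*} [DecidableEq α] (d : α → α → ℝ)
    (hsymm : ∀ u v, d u v = d v u)
    (hself : ∀ v, d v v = 0)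
    (htri : ∀ u v w, d u w ≤ d u v + d v w)
    (A Q : Finset α) :
    (A.card : ℝ) * (∑ v ∈ Q, ∑ w ∈ Q, d v w) ≤
      2 * ((Q.card : ℝ) - 1) * ∑ u ∈ A, ∑ v ∈ Q, d u v := by
  have per : ∀ u, (∑ v ∈ Q, ∑ w ∈ Q, d v w) ≤ 2 * ((Q.card : ℝ) - 1) * ∑ v ∈ Q, d u v := by
    intro u
    have step1 : (∑ v ∈ Q, ∑ w ∈ Q, d v w) ≤
        ∑ v ∈ Q, ∑ w ∈ Q, (d v u + d u w - (if w = v then d v u + d u w else 0)) := by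
      apply Finset.sum_le_sum
      intro v hv
      apply Finset.sum_le_sum
      intro w hw
      by_cases h : w = v
      · subst h; simp [hself, hsymm w u]
      · rw [if_neg h]
        have := htri v u w
        linarith
    have hrw : ∀ v ∈ Q, (∑ w ∈ Q, (d v u + d u w - (if w = v then d v u + d u w else 0)))
        = (Q.card : ℝ) * d u v + (∑ w ∈ Q, d u w) - (d u v + d u v) := by
      intro v hv
      rw [Finset.sum_sub_distrib, Finset.sum_add_distrib, Finset.sum_const,
        Finset.sum_ite_eq' Q v, if_pos hv, nsmul_eq_mul, hsymm v u]
    have step2 : (∑ v ∈ Q, ∑ w ∈ Q, (d v u + d u w - (if w = v then d v u + d u w else 0)))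
        = 2 * ((Q.card : ℝ) - 1) * ∑ v ∈ Q, d u v := by
      rw [Finset.sum_congr rfl hrw, Finset.sum_sub_distrib, Finset.sum_add_distrib,
        Finset.sum_const, ← Finset.mul_sum, Finset.sum_add_distrib, nsmul_eq_mul]
      ring
    calc (∑ v ∈ Q, ∑ w ∈ Q, d v w) ≤ _ := step1
      _ = _ := step2
  calc (A.card : ℝ) * (∑ v ∈ Q, ∑ w ∈ Q, d v w)
      = ∑ _u ∈ A, (∑ v ∈ Q, ∑ w ∈ Q, d v w) := by rw [Finset.sum_const, nsmul_eq_mul]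
    _ ≤ ∑ u ∈ A, 2 * ((Q.card : ℝ) - 1) * ∑ v ∈ Q, d u v :=
        Finset.sum_le_sum fun u _ => per u
    _ = 2 * ((Q.card : ℝ) - 1) * ∑ u ∈ A, ∑ v ∈ Q, d u v := by rw [Finset.mul_sum]

private lemma submod_telescope_aux {α : Type*} [DecidableEq α] (f : Finset α → ℝ)
    (hmono : ∀ X Y : Finset α, X ⊆ Y → f X ≤ f Y)
    (hsub : ∀ X Y : Finset α, f X + f Y ≥ f (X ∪ Y) + f (X ∩ Y))
    (x : Finset α) (S : Finset α) :
    f (x ∪ S) - f x ≤ ∑ v ∈ S, (f (insert v x) - f x) := by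
  induction S using Finset.induction_on with
  | empty => simp
  | @insert a S ha ih =>
    rw [Finset.sum_insert ha]
    have h1 := hsub (x ∪ S) (insert a x)
    have h2 : x ⊆ (x ∪ S) ∩ insert a x :=
      Finset.subset_inter Finset.subset_union_left (Finset.subset_insert a x)
    have h3 := hmono _ _ h2
    have h4 : (x ∪ S) ∪ insert a x = x ∪ insert a S := by
      ext b; simp [Finset.mem_union, Finset.mem_insert]; tauto
    rw [h4] at h1
    linarith

private lemma div_core_aux {α : Type*} [DecidableEq α] (d : α → α → ℝ)
    (hsymm : ∀ u v, d u v = d v u)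
    (hdnonneg : ∀ u v, 0 ≤ d u v)
    (hself : ∀ v, d v v = 0)
    (htri : ∀ u v w, d u w ≤ d u v + d v w)
    (k : ℕ) (hk : 2 ≤ k)
    (xs : Finset α) (hxs : xs.card = k)
    (x : Finset α) (hx : x.card < k) :
    ((xs \ x).card : ℝ) * (x.card : ℝ) * (∑ v ∈ xs, ∑ w ∈ xs, d v w) ≤
      2 * (k : ℝ) * ((k : ℝ) - 1) * ∑ v ∈ xs \ x, ∑ u ∈ x, d u v := by
  classical
  set S := xs \ x with hS
  set T := x ∩ xs with hT
  set R := x \ xs with hR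
  have hst : S.card + T.card = k := by
    rw [hS, hT, Finset.inter_comm x xs, Finset.card_sdiff_add_card_inter, hxs]
  have htr : T.card + R.card = x.card := by
    rw [hT, hR, Finset.card_inter_add_card_sdiff]
  have hxsdecomp : S ∪ T = xs := by
    rw [hS, hT, Finset.inter_comm x xs]; exact Finset.sdiff_union_inter xs x
  have hxdecomp : R ∪ T = x := by
    rw [hR, hT]; exact Finset.sdiff_union_inter x xs
  have hdisjST : Disjoint S T := Finset.sdiff_disjoint.mono_right Finset.inter_subset_left
  have hdisjRT : Disjoint R T := Finset.sdiff_disjoint.mono_right Finset.inter_subset_right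
  set FSS := ∑ v ∈ S, ∑ w ∈ S, d v w with hFSS
  set FTT := ∑ v ∈ T, ∑ w ∈ T, d v w with hFTT
  set B := ∑ u ∈ T, ∑ v ∈ S, d u v with hB
  set C := ∑ u ∈ R, ∑ v ∈ S, d u v with hC
  have hF : (∑ v ∈ xs, ∑ w ∈ xs, d v w) = FSS + 2 * B + FTT := by
    rw [← hxsdecomp, Finset.sum_union hdisjST,
        Finset.sum_congr rfl (fun v (hv : v ∈ S) => Finset.sum_union hdisjST),
        Finset.sum_congr rfl (fun v (hv : v ∈ T) => Finset.sum_union hdisjST),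
        Finset.sum_add_distrib, Finset.sum_add_distrib]
    have hBsymm : (∑ v ∈ S, ∑ w ∈ T, d v w) = B := by
      rw [hB, Finset.sum_comm]
      exact Finset.sum_congr rfl fun v _ => Finset.sum_congr rfl fun w _ => (hsymm v w).symm
    rw [hBsymm]
    ring
  have hP : (∑ v ∈ S, ∑ u ∈ x, d u v) = C + B := by
    rw [Finset.sum_comm, ← hxdecomp, Finset.sum_union hdisjRT]
  have hI := route_sum_aux d hsymm hself htri T S
  have hII := route_sum_aux d hsymm hself htri R S
  have hIII := route_sum_aux d hsymm hself htri S T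
  have hB2 : (∑ u ∈ S, ∑ v ∈ T, d u v) = B := by
    rw [hB, Finset.sum_comm]
    exact Finset.sum_congr rfl fun v _ => Finset.sum_congr rfl fun w _ => (hsymm v w).symm
  rw [hB2] at hIII
  have hBnn : 0 ≤ B := Finset.sum_nonneg fun u _ => Finset.sum_nonneg fun v _ => hdnonneg u v
  have hCnn : 0 ≤ C := Finset.sum_nonneg fun u _ => Finset.sum_nonneg fun v _ => hdnonneg u v
  have hFSSnn : 0 ≤ FSS := Finset.sum_nonneg fun u _ => Finset.sum_nonneg fun v _ => hdnonneg u v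
  have hFTTnn : 0 ≤ FTT := Finset.sum_nonneg fun u _ => Finset.sum_nonneg fun v _ => hdnonneg u v
  have hstR : (S.card : ℝ) + T.card = k := by exact_mod_cast congrArg (Nat.cast : ℕ → ℝ) hst
  have htrR : (T.card : ℝ) + R.card = x.card := by exact_mod_cast congrArg (Nat.cast : ℕ → ℝ) htr
  have hmR : (x.card : ℝ) + 1 ≤ k := by exact_mod_cast hx
  have hk1 : (1 : ℝ) ≤ (k : ℝ) - 1 := by
    have : (2 : ℝ) ≤ k := by exact_mod_cast hk
    linarith
  rw [hF, hP]
  set sR := (S.card : ℝ)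
  set tR := (T.card : ℝ)
  set rR := (R.card : ℝ)
  set mR := (x.card : ℝ)
  set kR := (k : ℝ)
  have htnn : (0:ℝ) ≤ tR := by positivity
  have e1 : 0 ≤ (kR - mR) * (kR - 1) * (2 * (sR - 1) * B - tR * FSS) := by
    apply mul_nonneg (mul_nonneg (by linarith) (by linarith))
    linarith [hI]
  have e2 : 0 ≤ kR * (kR - 1) * (2 * (sR - 1) * C - rR * FSS) := by
    apply mul_nonneg (mul_nonneg (by linarith) (by linarith))
    linarith [hII]
  have e3 : 0 ≤ mR * (kR - 1) * (2 * (tR - 1) * B - sR * FTT) := by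
    have hmnn : (0:ℝ) ≤ mR := by positivity
    apply mul_nonneg (mul_nonneg hmnn (by linarith))
    linarith [hIII]
  have e4 : 0 ≤ 2 * kR * (kR - 1) * tR * C := by
    apply mul_nonneg _ hCnn
    apply mul_nonneg (mul_nonneg (by linarith) (by linarith)) htnn
  have e5 : 0 ≤ 2 * (kR - 1) * tR * (kR - mR) * B := by
    apply mul_nonneg (mul_nonneg (mul_nonneg (by linarith) htnn) (by linarith)) hBnn
  have hsub : sR = kR - tR := by linarith
  have hrsub : rR = mR - tR := by linarith
  have identity : (kR - 1) * (2 * kR * (kR - 1) * (C + B) - sR * mR * (FSS + 2 * B + FTT))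
      = (kR - mR) * (kR - 1) * (2 * (sR - 1) * B - tR * FSS)
        + kR * (kR - 1) * (2 * (sR - 1) * C - rR * FSS)
        + mR * (kR - 1) * (2 * (tR - 1) * B - sR * FTT)
        + 2 * kR * (kR - 1) * tR * C
        + 2 * (kR - 1) * tR * (kR - mR) * B := by
    rw [hsub, hrsub]; ring
  have hnn : 0 ≤ (kR - 1) * (2 * kR * (kR - 1) * (C + B) - sR * mR * (FSS + 2 * B + FTT)) := by
    rw [identity]; linarith
  have hkpos : (0:ℝ) < kR - 1 := by linarith
  have := (mul_nonneg_iff_of_pos_left hkpos).mp hnn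
  linarith

end Aux

private lemma sumDiv_insert_aux {α : Type*} [DecidableEq α] (d : α → α → ℝ)
    (hsymm : ∀ u v, d u v = d v u)
    (hself : ∀ v, d v v = 0)
    {x : Finset α} {v : α} (hvx : v ∉ x) :
    sumDiv d (insert v x) = sumDiv d x + ∑ u ∈ x, d u v := by
  have key : (∑ u ∈ insert v x, ∑ w ∈ insert v x, d u w)
      = (∑ u ∈ x, ∑ w ∈ x, d u w) + 2 * ∑ u ∈ x, d u v := by
    rw [Finset.sum_insert hvx, Finset.sum_insert hvx,
        Finset.sum_congr rfl (fun u (hu : u ∈ x) => Finset.sum_insert hvx),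
        Finset.sum_add_distrib, hself]
    have hsw : (∑ w ∈ x, d v w) = ∑ w ∈ x, d w v :=
      Finset.sum_congr rfl fun w _ => hsymm v w
    rw [hsw]
    ring
  unfold sumDiv
  rw [key]
  ring

theorem exists_good_item_cardinality_sum {α : Type*} [DecidableEq α] [Fintype α]
    (f : Finset α → ℝ)
    (hmono : ∀ X Y : Finset α, X ⊆ Y → f X ≤ f Y)
    (hsub : ∀ X Y : Finset α, f X + f Y ≥ f (X ∪ Y) + f (X ∩ Y))
    (hnonneg : ∀ X : Finset α, 0 ≤ f X)
    (hempty : f ∅ = 0)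
    (d : α → α → ℝ)
    (hsymm : ∀ u v, d u v = d v u)
    (hdnonneg : ∀ u v, 0 ≤ d u v)
    (hself : ∀ v, d v v = 0)
    (htri : ∀ u v w, d u w ≤ d u v + d v w)
    (lam : ℝ) (hlam : 0 ≤ lam)
    (k : ℕ) (hk : 2 ≤ k)
    (xs : Finset α) (hxs : xs.card = k)
    (x : Finset α) (hx : x.card < k) :
    ∃ v ∉ x,
      f (insert v x) / 2 + lam * sumDiv d (insert v x) - f x / 2 - lam * sumDiv d x ≥
        (f xs - f x) / (2 * (k : ℝ)) +
          (lam * (x.card : ℝ) / ((k : ℝ) * ((k : ℝ) - 1))) * sumDiv d xs := by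
  classical
  set S := xs \ x with hS
  have hSne : S.Nonempty := by
    rw [hS, Finset.sdiff_nonempty]
    intro hsubset
    have := Finset.card_le_card hsubset
    omega
  have hvnotx : ∀ v ∈ S, v ∉ x := fun v hv => (Finset.mem_sdiff.mp hv).2
  have hk2R : (2:ℝ) ≤ (k:ℝ) := by exact_mod_cast hk
  have hk0 : (0:ℝ) < (k:ℝ) := by linarith
  have hk1 : (0:ℝ) < (k:ℝ) - 1 := by linarith
  have hsk : (S.card : ℝ) ≤ (k:ℝ) := by
    have : S.card ≤ xs.card := Finset.card_le_card (by rw [hS]; exact Finset.sdiff_subset)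
    rw [hxs] at this
    exact_mod_cast this
  have hsnn : (0:ℝ) ≤ (S.card : ℝ) := by positivity
  -- gain rewrite
  have hgain : ∀ v ∈ S,
      f (insert v x) / 2 + lam * sumDiv d (insert v x) - f x / 2 - lam * sumDiv d x
        = (f (insert v x) - f x) / 2 + lam * ∑ u ∈ x, d u v := by
    intro v hv
    rw [sumDiv_insert_aux d hsymm hself (hvnotx v hv)]
    ring
  -- f part
  have htel : f xs - f x ≤ ∑ v ∈ S, (f (insert v x) - f x) := by
    have h1 : f xs ≤ f (x ∪ S) := by
      apply hmono
      intro a ha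
      rw [Finset.mem_union, hS, Finset.mem_sdiff]
      by_cases h : a ∈ x
      · exact Or.inl h
      · exact Or.inr ⟨ha, h⟩
    have h2 := submod_telescope_aux f hmono hsub x S
    linarith
  have hposterms : 0 ≤ ∑ v ∈ S, (f (insert v x) - f x) := by
    apply Finset.sum_nonneg
    intro v hv
    have := hmono x (insert v x) (Finset.subset_insert v x)
    linarith
  have hfpart : (S.card:ℝ) * ((f xs - f x) / (2*(k:ℝ))) ≤
      (∑ v ∈ S, (f (insert v x) - f x)) / 2 := by
    rw [← mul_div_assoc, div_le_div_iff₀ (by linarith) two_pos]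
    rcases le_or_gt (f xs - f x) 0 with h | h
    · nlinarith
    · nlinarith
  -- div part
  have hcore := div_core_aux d hsymm hdnonneg hself htri k hk xs hxs x hx
  have hF2 : (∑ v ∈ xs, ∑ w ∈ xs, d v w) = 2 * sumDiv d xs := by
    unfold sumDiv; ring
  rw [hF2] at hcore
  have hdivpart : (S.card:ℝ) * ((lam * (x.card:ℝ) / ((k:ℝ)*((k:ℝ)-1))) * sumDiv d xs) ≤
      lam * ∑ v ∈ S, ∑ u ∈ x, d u v := by
    rw [← hS] at hcore
    have base : (S.card:ℝ) * ((x.card:ℝ) * sumDiv d xs / ((k:ℝ)*((k:ℝ)-1))) ≤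
        ∑ v ∈ S, ∑ u ∈ x, d u v := by
      rw [← mul_div_assoc, div_le_iff₀ (by positivity)]
      nlinarith
    have h' := mul_le_mul_of_nonneg_left base hlam
    calc (S.card:ℝ) * ((lam * (x.card:ℝ) / ((k:ℝ)*((k:ℝ)-1))) * sumDiv d xs)
        = lam * ((S.card:ℝ) * ((x.card:ℝ) * sumDiv d xs / ((k:ℝ)*((k:ℝ)-1)))) := by ring
      _ ≤ lam * ∑ v ∈ S, ∑ u ∈ x, d u v := h'
  -- averaging
  have main : (∑ _v ∈ S, ((f xs - f x) / (2 * (k : ℝ)) +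
          (lam * (x.card : ℝ) / ((k : ℝ) * ((k : ℝ) - 1))) * sumDiv d xs))
      ≤ ∑ v ∈ S, (f (insert v x) / 2 + lam * sumDiv d (insert v x) - f x / 2
          - lam * sumDiv d x) := by
    rw [Finset.sum_const, nsmul_eq_mul, Finset.sum_congr rfl hgain,
        Finset.sum_add_distrib, ← Finset.sum_div, ← Finset.mul_sum]
    calc (S.card:ℝ) * ((f xs - f x) / (2 * (k : ℝ)) +
            (lam * (x.card : ℝ) / ((k : ℝ) * ((k : ℝ) - 1))) * sumDiv d xs)
        = (S.card:ℝ) * ((f xs - f x) / (2*(k:ℝ)))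
          + (S.card:ℝ) * ((lam * (x.card:ℝ) / ((k:ℝ)*((k:ℝ)-1))) * sumDiv d xs) := by ring
      _ ≤ (∑ v ∈ S, (f (insert v x) - f x)) / 2 + lam * ∑ v ∈ S, ∑ u ∈ x, d u v :=
          add_le_add hfpart hdivpart
  obtain ⟨v, hvS, hvle⟩ := Finset.exists_le_of_sum_le hSne main
  exact ⟨v, hvnotx v hvS, hvle⟩
end

section
/- Let d be a metric on V and y ⊆ V with |y| > 1. For any x ⊆ V with 1 ≤ |x| < |y|, there exists an item u ∉ x such that min_{v ∈ x} d(u,v) ≥ div(y)/2, where div(y) = min_{{u,v} ⊆ y, u≠v} d(u,v) is the min-diversity of y. -/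
theorem exists_far_item_min_diversity {α : Type*} [DecidableEq α]
    (d : α → α → ℝ)
    (hsymm : ∀ u v, d u v = d v u)
    (hnonneg : ∀ u v, 0 ≤ d u v)
    (hself : ∀ v, d v v = 0)
    (htri : ∀ u v w, d u w ≤ d u v + d v w)
    (y : Finset α) (hy : 1 < y.card) (hne : y.offDiag.Nonempty)
    (x : Finset α) (hx1 : 1 ≤ x.card) (hxy : x.card < y.card) :
    ∃ u ∉ x, ∀ v ∈ x,
      d u v ≥ (y.offDiag.inf' hne fun p => d p.1 p.2) / 2 := by
  set D := y.offDiag.inf' hne fun p => d p.1 p.2 with hDdef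
  rcases le_or_gt D 0 with hD | hD
  · have hsub : ¬ y ⊆ x := fun h => absurd (Finset.card_le_card h) (by omega)
    rw [Finset.not_subset] at hsub
    obtain ⟨u, hu, hux⟩ := hsub
    exact ⟨u, hux, fun v hv => le_trans (by linarith) (hnonneg u v)⟩
  · by_contra hcon
    push_neg at hcon
    have hclose : ∀ u, ∃ v, u ∈ y → v ∈ x ∧ d u v < D / 2 := by
      intro u
      by_cases hu : u ∈ y
      · by_cases hux : u ∈ x
        · exact ⟨u, fun _ => ⟨hux, by rw [hself]; linarith⟩⟩
        · obtain ⟨v, hv, hdv⟩ := hcon u hux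
          exact ⟨v, fun _ => ⟨hv, by linarith⟩⟩
      · exact ⟨u, fun h => absurd h hu⟩
    choose g hg using hclose
    have hle : y.card ≤ x.card := by
      apply Finset.card_le_card_of_injOn g (fun u hu => (hg u hu).1)
      intro u1 hu1 u2 hu2 heq
      by_contra hne12
      simp only [Finset.mem_coe] at hu1 hu2
      have hmem : (u1, u2) ∈ y.offDiag := Finset.mem_offDiag.mpr ⟨hu1, hu2, hne12⟩
      have hDle : D ≤ d u1 u2 := Finset.inf'_le _ hmem
      have h1 := (hg u1 hu1).2
      have h2 := (hg u2 hu2).2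
      have : d u1 u2 ≤ d u1 (g u1) + d (g u1) u2 := htri _ _ _
      rw [heq] at this
      rw [hsymm (g u2) u2] at this
      rw [heq] at h1
      linarith
    omega
end

section
/- Let d be a metric on V, k ≥ 2, and x* ⊆ V with |x*| = k. For any x ⊆ V with |x| < k, Σ_{u ∈ x* \ x} min_{v ∈ x} d(u,v) ≥ mst(x*)/2 − mst(x), where mst(S) is the minimum spanning tree weight of S under d. -/
set_option linter.unusedSectionVars false
set_option linter.unusedVariables false
set_option linter.unnecessarySeqFocus false

/-- The set of total weights of spanning trees of `S` (under edge weights `d`),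
each spanning tree encoded by an ordering `u` of the items of `S` together with a
choice, for each non-initial item, of an earlier item as its tree neighbor. -/
def mstWeights {α : Type*} (d : α → α → ℝ) (S : Finset α) : Set ℝ :=
  { w | ∃ u : ℕ → α, ∃ p : ℕ → ℕ,
      (∀ i j, i < S.card → j < S.card → u i = u j → i = j) ∧
      (∀ a ∈ S, ∃ i, i < S.card ∧ u i = a) ∧
      (∀ i, 1 ≤ i → i < S.card → p i < i) ∧
      w = ∑ i ∈ Finset.Ico 1 S.card, d (u i) (u (p i)) }

/-- Minimum spanning tree weight of `S` under edge weights `d`. -/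
noncomputable def mst {α : Type*} (d : α → α → ℝ) (S : Finset α) : ℝ :=
  sInf (mstWeights d S)


section Aux
variable {α : Type*}

def pathWeight (d : α → α → ℝ) : List α → ℝ
  | [] => 0
  | [_] => 0
  | a :: b :: t => d a b + pathWeight d (b :: t)

variable (d : α → α → ℝ) (hsymm : ∀ u v, d u v = d v u)
    (hnonneg : ∀ u v, 0 ≤ d u v) (htri : ∀ u v w, d u w ≤ d u v + d v w)

include hnonneg in
lemma pw_nonneg : ∀ l : List α, 0 ≤ pathWeight d l
  | [] => le_refl _
  | [_] => le_refl _
  | a :: b :: t => by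
      have h1 := pw_nonneg (b :: t)
      have h2 := hnonneg a b
      simp only [pathWeight]; linarith

include hsymm hnonneg htri in
lemma pw_cons_le (q x : α) : ∀ L : List α, pathWeight d (x :: L) ≤ pathWeight d (q :: L) + d q x
  | [] => by simpa [pathWeight] using hnonneg q x
  | b :: t => by
      simp only [pathWeight]
      have h1 : d x b ≤ d x q + d q b := htri x q b
      have h2 : d x q = d q x := hsymm x q
      linarith

include hsymm hnonneg htri in
lemma pw_replace (q x : α) : ∀ (l1 l2 : List α),
    pathWeight d (l1 ++ x :: l2) ≤ pathWeight d (l1 ++ q :: l2) + 2 * d q x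
  | [], l2 => by
      have h1 := pw_cons_le d hsymm hnonneg htri q x l2
      have h2 := hnonneg q x
      simp only [List.nil_append]
      linarith
  | [a], l2 => by
      have h1 := pw_cons_le d hsymm hnonneg htri q x l2
      have h2 : d a x ≤ d a q + d q x := htri a q x
      simp only [List.cons_append, List.nil_append, pathWeight]
      linarith
  | a :: b :: t, l2 => by
      have ih := pw_replace q x (b :: t) l2
      simp only [List.cons_append, List.append_eq, pathWeight] at *
      linarith

include hsymm hnonneg htri in
lemma pw_insert (q x : α) : ∀ (l1 l2 : List α),
    pathWeight d (l1 ++ q :: x :: l2) ≤ pathWeight d (l1 ++ q :: l2) + 2 * d q x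
  | [], l2 => by
      have h1 := pw_cons_le d hsymm hnonneg htri q x l2
      have h2 := hnonneg q x
      simp only [List.nil_append, pathWeight]
      linarith
  | [a], l2 => by
      have ih := pw_insert q x [] l2
      simp only [List.cons_append, List.nil_append, List.append_eq, pathWeight] at *
      linarith
  | a :: b :: t, l2 => by
      have ih := pw_insert q x (b :: t) l2
      simp only [List.cons_append, List.append_eq, pathWeight] at *
      linarith

include hsymm in
lemma pw_eq_sum (a0 : α) : ∀ l : List α,
    pathWeight d l = ∑ i ∈ Finset.range (l.length - 1), d (l.getD (i+1) a0) (l.getD i a0)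
  | [] => by simp [pathWeight]
  | [a] => by simp [pathWeight]
  | a :: b :: t => by
      have ih := pw_eq_sum a0 (b :: t)
      simp only [pathWeight, List.length_cons] at *
      rw [show t.length + 1 + 1 - 1 = t.length + 1 from rfl, Finset.sum_range_succ']
      have h1 : ∀ i, ((a :: b :: t).getD (i+1+1) a0) = ((b :: t).getD (i+1) a0) := fun i => rfl
      simp only [h1]
      have h0 : ((a :: b :: t).getD 1 a0) = b := rfl
      have h00 : ((a :: b :: t).getD 0 a0) = a := rfl
      rw [h0, h00, hsymm b a]
      have h2 : ∀ i, ((a :: b :: t).getD (i+1) a0 : α) = ((b :: t).getD i a0) := fun i => rfl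
      simp only [h2]
      rw [ih]; simp only [Nat.add_sub_cancel]
      ring

lemma nodup_insert_after (l1 l2 : List α) (q x : α)
    (h : (l1 ++ q :: l2).Nodup) (hx : x ∉ l1 ++ q :: l2) :
    (l1 ++ q :: x :: l2).Nodup := by
  simp only [List.nodup_append, List.nodup_cons, List.mem_append, List.mem_cons] at *
  aesop

lemma nodup_replace (l1 l2 : List α) (q x : α)
    (h : (l1 ++ q :: l2).Nodup) (hx : x ∉ l1 ++ q :: l2) :
    (l1 ++ x :: l2).Nodup := by
  simp only [List.nodup_append, List.nodup_cons, List.mem_append, List.mem_cons] at *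
  aesop

variable [DecidableEq α]

lemma toFinset_insert_after (l1 l2 : List α) (q x : α) :
    (l1 ++ q :: x :: l2).toFinset = insert x (l1 ++ q :: l2).toFinset := by
  ext a
  simp only [List.mem_toFinset, List.mem_append, List.mem_cons, Finset.mem_insert]
  tauto

lemma toFinset_replace (l1 l2 : List α) (q x : α)
    (h : (l1 ++ q :: l2).Nodup) (hqx : q ≠ x) :
    (l1 ++ x :: l2).toFinset = insert x ((l1 ++ q :: l2).toFinset.erase q) := by
  have hq1 : q ∉ l1 := by
    simp only [List.nodup_append, List.nodup_cons, List.mem_append, List.mem_cons] at h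
    intro hq; grind
  have hq2 : q ∉ l2 := by
    simp only [List.nodup_append, List.nodup_cons, List.mem_append, List.mem_cons] at h
    aesop
  ext a
  simp only [List.mem_toFinset, List.mem_append, List.mem_cons, Finset.mem_insert,
    Finset.mem_erase]
  constructor
  · rintro (h1 | rfl | h2)
    · exact Or.inr ⟨fun hh => hq1 (hh ▸ h1), Or.inl h1⟩
    · exact Or.inl rfl
    · exact Or.inr ⟨fun hh => hq2 (hh ▸ h2), Or.inr (Or.inr h2)⟩
  · rintro (rfl | ⟨hne, h1 | rfl | h2⟩)
    · exact Or.inr (Or.inl rfl)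
    · exact Or.inl h1
    · exact absurd rfl hne
    · exact Or.inr (Or.inr h2)

include hsymm hnonneg htri in
/-- From any (encoded) tree covering `S`, extract a Hamiltonian path on `S`
of weight at most twice the tree weight. -/
lemma ham_path : ∀ n : ℕ, ∀ (u : ℕ → α) (p : ℕ → ℕ),
    (∀ i j, i < n → j < n → u i = u j → i = j) →
    (∀ i, 1 ≤ i → i < n → p i < i) →
    ∀ S : Finset α, S.Nonempty → (∀ a ∈ S, ∃ i, i < n ∧ u i = a) →
    ∃ l : List α, l.Nodup ∧ l.toFinset = S ∧
      pathWeight d l ≤ 2 * ∑ i ∈ Finset.Ico 1 n, d (u i) (u (p i)) := by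
  intro n
  induction n with
  | zero =>
      intro u p _ _ S hS hcov
      obtain ⟨a, ha⟩ := hS
      obtain ⟨i, hi, _⟩ := hcov a ha
      omega
  | succ n IH =>
      intro u p hinj hpar S hS hcov
      rcases Nat.eq_zero_or_pos n with rfl | hn
      · -- S = {u 0}
        have hSeq : S = {u 0} := by
          apply Finset.eq_singleton_iff_nonempty_unique_mem.mpr
          refine ⟨hS, fun a ha => ?_⟩
          obtain ⟨i, hi, rfl⟩ := hcov a ha
          interval_cases i <;> rfl
        refine ⟨[u 0], by simp, by simp [hSeq], ?_⟩
        simp [pathWeight]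
      · have hsum : ∑ i ∈ Finset.Ico 1 (n+1), d (u i) (u (p i))
            = (∑ i ∈ Finset.Ico 1 n, d (u i) (u (p i))) + d (u n) (u (p n)) :=
          Finset.sum_Ico_succ_top hn _
        have hinj' : ∀ i j, i < n → j < n → u i = u j → i = j :=
          fun i j hi hj => hinj i j (by omega) (by omega)
        have hpar' : ∀ i, 1 ≤ i → i < n → p i < i :=
          fun i h1 h2 => hpar i h1 (by omega)
        have hpn : p n < n := hpar n hn (by omega)
        have hqne : u (p n) ≠ u n := by
          intro h
          have := hinj (p n) n (by omega) (by omega) h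
          omega
        have he : 0 ≤ d (u n) (u (p n)) := hnonneg _ _
        by_cases hl : u n ∈ S
        · -- leaf in S
          set q := u (p n) with hq
          set S' := insert q (S.erase (u n)) with hS'
          have hScov' : ∀ a ∈ S', ∃ i, i < n ∧ u i = a := by
            intro a ha
            rw [hS', Finset.mem_insert] at ha
            rcases ha with rfl | ha
            · exact ⟨p n, hpn, rfl⟩
            · obtain ⟨hane, haS⟩ := Finset.mem_erase.mp ha
              obtain ⟨i, hi, rfl⟩ := hcov a haS
              refine ⟨i, ?_, rfl⟩
              rcases Nat.lt_succ_iff_lt_or_eq.mp hi with h | rfl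
              · exact h
              · exact absurd rfl hane
          obtain ⟨l', hnd', hfin', hw'⟩ := IH u p hinj' hpar' S'
            ⟨q, Finset.mem_insert_self _ _⟩ hScov'
          have hqmem : q ∈ l' := by
            rw [← List.mem_toFinset, hfin']; exact Finset.mem_insert_self _ _
          obtain ⟨l1, l2, rfl⟩ := List.append_of_mem hqmem
          have hxnot : u n ∉ l1 ++ q :: l2 := by
            rw [← List.mem_toFinset, hfin', hS']
            simp only [Finset.mem_insert, Finset.mem_erase]
            rintro (h | ⟨h, _⟩)
            · exact hqne h.symm
            · exact h rfl
          by_cases hqS : q ∈ S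
          · -- insert u n after q
            refine ⟨l1 ++ q :: u n :: l2, nodup_insert_after l1 l2 q (u n) hnd' hxnot, ?_, ?_⟩
            · rw [toFinset_insert_after, hfin', hS']
              ext a
              simp only [Finset.mem_insert, Finset.mem_erase]
              constructor
              · rintro (rfl | rfl | ⟨_, h⟩)
                · exact hl
                · exact hqS
                · exact h
              · intro ha
                by_cases hau : a = u n
                · exact Or.inl hau
                · exact Or.inr (Or.inr ⟨hau, ha⟩)
            · have := pw_insert d hsymm hnonneg htri q (u n) l1 l2
              rw [hsum]
              have hdq : d q (u n) = d (u n) (u (p n)) := hsymm q (u n)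
              linarith
          · -- replace q by u n
            refine ⟨l1 ++ u n :: l2, nodup_replace l1 l2 q (u n) hnd' hxnot, ?_, ?_⟩
            · rw [toFinset_replace l1 l2 q (u n) hnd' hqne, hfin', hS',
                Finset.erase_insert (fun h => hqS (Finset.mem_of_mem_erase h)),
                Finset.insert_erase hl]
            · have := pw_replace d hsymm hnonneg htri q (u n) l1 l2
              rw [hsum]
              have hdq : d q (u n) = d (u n) (u (p n)) := hsymm q (u n)
              linarith
        · -- leaf not in S
          have hScov : ∀ a ∈ S, ∃ i, i < n ∧ u i = a := by
            intro a ha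
            obtain ⟨i, hi, rfl⟩ := hcov a ha
            refine ⟨i, ?_, rfl⟩
            rcases Nat.lt_succ_iff_lt_or_eq.mp hi with h | rfl
            · exact h
            · exact absurd ha hl
          obtain ⟨l, h1, h2, h3⟩ := IH u p hinj' hpar' S hS hScov
          exact ⟨l, h1, h2, by rw [hsum]; linarith⟩

variable [DecidableEq α]

include hsymm in
lemma pw_mem_mstWeights (l : List α) (hnd : l.Nodup) (hl : l ≠ []) :
    pathWeight d l ∈ mstWeights d l.toFinset := by
  have a0 : α := l.head hl
  have hcard : l.toFinset.card = l.length := List.toFinset_card_of_nodup hnd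
  refine ⟨fun i => l.getD i a0, fun i => i - 1, ?_, ?_, ?_, ?_⟩
  · intro i j hi hj hij
    dsimp only at hij
    rw [hcard] at hi hj
    rw [List.getD_eq_getElem _ _ hi, List.getD_eq_getElem _ _ hj] at hij
    exact (List.Nodup.getElem_inj_iff hnd).mp hij
  · intro a ha
    rw [List.mem_toFinset] at ha
    obtain ⟨i, hi, hgi⟩ := List.getElem_of_mem ha
    exact ⟨i, by rwa [hcard], by dsimp only; rw [List.getD_eq_getElem _ _ hi]; exact hgi⟩
  · intro i h1 hi; dsimp only; omega
  · rw [hcard, pw_eq_sum d hsymm a0, Finset.sum_Ico_eq_sum_range]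
    apply Finset.sum_congr rfl
    intro i _
    dsimp only
    congr 1 <;> congr 1 <;> omega

lemma mstWeights_bddBelow (hnonneg : ∀ u v, 0 ≤ d u v) (S : Finset α) :
    BddBelow (mstWeights d S) := by
  refine ⟨0, fun w hw => ?_⟩
  obtain ⟨u, p, _, _, _, rfl⟩ := hw
  exact Finset.sum_nonneg fun i _ => hnonneg _ _

include hsymm in
lemma mst_le_pw (hnonneg : ∀ u v, 0 ≤ d u v) (l : List α) (hnd : l.Nodup) (hl : l ≠ []) :
    mst d l.toFinset ≤ pathWeight d l :=
  csInf_le (mstWeights_bddBelow d hnonneg _) (pw_mem_mstWeights d hsymm l hnd hl)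

include hsymm in
lemma list_map_sum (g : α → ℝ) (a0 : α) :
    ∀ l : List α, (l.map g).sum = ∑ i ∈ Finset.range l.length, g (l.getD i a0)
  | [] => by simp
  | a :: t => by
      rw [List.map_cons, List.sum_cons, List.length_cons, Finset.sum_range_succ',
        list_map_sum g a0 t]
      have h1 : ∀ i : ℕ, ((a :: t).getD (i+1) a0 : α) = t.getD i a0 := fun i => rfl
      have h2 : ((a :: t).getD 0 a0 : α) = a := rfl
      simp only [h1, h2]
      ring

end Aux

theorem sum_min_dist_ge_half_mst {α : Type*} [DecidableEq α]
    (d : α → α → ℝ)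
    (hsymm : ∀ u v, d u v = d v u)
    (hnonneg : ∀ u v, 0 ≤ d u v)
    (hself : ∀ v, d v v = 0)
    (htri : ∀ u v w, d u w ≤ d u v + d v w)
    (k : ℕ) (hk : 2 ≤ k)
    (xs : Finset α) (hxs : xs.card = k)
    (x : Finset α) (hne : x.Nonempty) (hx : x.card < k) :
    ∑ a ∈ xs \ x, (x.inf' hne fun v => d a v) ≥ mst d xs / 2 - mst d x := by
  classical
  obtain ⟨a0, ha0⟩ := id hne
  set M := ∑ a ∈ xs \ x, (x.inf' hne fun v => d a v) with hM
  set n := x.card with hn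
  have hn1 : 1 ≤ n := Finset.card_pos.mpr ⟨a0, ha0⟩
  set ys := (xs \ x).toList with hys
  set m := (xs \ x).card with hm
  have hysl : ys.length = m := Finset.length_toList _
  have hysnd : ys.Nodup := Finset.nodup_toList _
  have hysfin : ys.toFinset = xs \ x := Finset.toList_toFinset _
  -- the minimum-distance sum as a sum over indices of ys
  have hMsum : M = ∑ j ∈ Finset.range m, x.inf' hne fun v => d (ys.getD j a0) v := by
    rw [hM, ← hysfin, List.sum_toFinset _ hysnd,
      list_map_sum d hsymm (fun a => x.inf' hne fun v => d a v) a0 ys, hysl]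
  -- key inequality against every spanning-tree weight of x
  have key : ∀ w ∈ mstWeights d x, mst d xs ≤ 2 * (w + M) := by
    rintro w ⟨u, p, hinj, hcov, hpar, rfl⟩
    rw [← hn] at hinj hcov hpar
    -- u maps [0,n) into x
    have himg : ∀ i, i < n → u i ∈ x := by
      have hsub : x ⊆ Finset.image (fun i : Fin n => u i) Finset.univ := by
        intro a ha
        obtain ⟨i, hi, rfl⟩ := hcov a ha
        exact Finset.mem_image.mpr ⟨⟨i, hi⟩, Finset.mem_univ _, rfl⟩
      have hle : (Finset.image (fun i : Fin n => u i) Finset.univ).card ≤ x.card :=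
        le_trans Finset.card_image_le (by simp [hn])
      have heq := Finset.eq_of_subset_of_card_le hsub hle
      intro i hi
      rw [heq]
      exact Finset.mem_image.mpr ⟨⟨i, hi⟩, Finset.mem_univ _, rfl⟩
    have hysmem : ∀ j, j < m → ys.getD j a0 ∈ xs \ x := by
      intro j hj
      have hmem : ys.getD j a0 ∈ ys := by
        rw [List.getD_eq_getElem ys a0 (by omega : j < ys.length)]
        exact List.getElem_mem _
      exact Finset.mem_toList.mp hmem
    -- nearest-point index
    have hnear : ∀ a : α, ∃ i0, i0 < n ∧ d a (u i0) = x.inf' hne fun v => d a v := by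
      intro a
      obtain ⟨v, hv, hval⟩ := Finset.exists_mem_eq_inf' hne (fun v => d a v)
      obtain ⟨i0, hi0, rfl⟩ := hcov v hv
      exact ⟨i0, hi0, hval.symm⟩
    choose idx hidxlt hidxval using hnear
    -- extended tree on x ∪ (xs \ x)
    set u' : ℕ → α := fun i => if i < n then u i else ys.getD (i - n) a0 with hu'
    set p' : ℕ → ℕ := fun i => if i < n then p i else idx (ys.getD (i - n) a0) with hp'
    have hu'lt : ∀ i, i < n → u' i = u i := fun i hi => if_pos hi
    have hu'ge : ∀ i, n ≤ i → u' i = ys.getD (i - n) a0 := fun i hi => if_neg (by omega)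
    have hinj' : ∀ i j, i < n + m → j < n + m → u' i = u' j → i = j := by
      intro i j hi hj hij
      rcases lt_or_ge i n with hi' | hi' <;> rcases lt_or_ge j n with hj' | hj'
      · rw [hu'lt i hi', hu'lt j hj'] at hij; exact hinj i j hi' hj' hij
      · rw [hu'lt i hi', hu'ge j hj'] at hij
        have h1 := himg i hi'
        have h2 := hysmem (j - n) (by omega)
        rw [← hij] at h2
        exact absurd h1 (Finset.mem_sdiff.mp h2).2
      · rw [hu'ge i hi', hu'lt j hj'] at hij
        have h1 := himg j hj'
        have h2 := hysmem (i - n) (by omega)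
        rw [hij] at h2
        exact absurd h1 (Finset.mem_sdiff.mp h2).2
      · rw [hu'ge i hi', hu'ge j hj'] at hij
        have hilen : i - n < ys.length := by omega
        have hjlen : j - n < ys.length := by omega
        rw [List.getD_eq_getElem ys a0 hilen, List.getD_eq_getElem ys a0 hjlen] at hij
        have := (List.Nodup.getElem_inj_iff hysnd).mp hij
        omega
    have hpar' : ∀ i, 1 ≤ i → i < n + m → p' i < i := by
      intro i h1 h2
      rcases lt_or_ge i n with hi' | hi'
      · rw [hp']; simp only [if_pos hi']; exact hpar i h1 hi'
      · rw [hp']; simp only [if_neg (by omega : ¬ i < n)]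
        exact lt_of_lt_of_le (hidxlt _) hi'
    have hcov' : ∀ a ∈ xs, ∃ i, i < n + m ∧ u' i = a := by
      intro a ha
      by_cases hax : a ∈ x
      · obtain ⟨i, hi, rfl⟩ := hcov a hax
        exact ⟨i, by omega, hu'lt i hi⟩
      · have hmem : a ∈ ys := Finset.mem_toList.mpr (Finset.mem_sdiff.mpr ⟨ha, hax⟩)
        obtain ⟨j, hj, rfl⟩ := List.getElem_of_mem hmem
        refine ⟨n + j, by omega, ?_⟩
        rw [hu'ge (n + j) (by omega)]
        rw [List.getD_eq_getElem ys a0 (by omega : n + j - n < ys.length)]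
        congr 1
        omega
    have hxs_ne : xs.Nonempty := Finset.card_pos.mp (by omega)
    obtain ⟨l, hlnd, hlfin, hlw⟩ :=
      ham_path d hsymm hnonneg htri (n + m) u' p' hinj' hpar' xs hxs_ne hcov'
    have hlne : l ≠ [] := by
      intro h
      rw [h] at hlfin
      exact hxs_ne.ne_empty (by simpa using hlfin.symm)
    have hmst_le : mst d xs ≤ pathWeight d l := by
      have := mst_le_pw d hsymm hnonneg l hlnd hlne
      rwa [hlfin] at this
    -- compute the extended tree weight
    have hsplit : ∑ i ∈ Finset.Ico 1 (n + m), d (u' i) (u' (p' i))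
        = (∑ i ∈ Finset.Ico 1 n, d (u' i) (u' (p' i)))
          + ∑ i ∈ Finset.Ico n (n + m), d (u' i) (u' (p' i)) :=
      (Finset.sum_Ico_consecutive _ hn1 (by omega)).symm
    have hfirst : ∑ i ∈ Finset.Ico 1 n, d (u' i) (u' (p' i))
        = ∑ i ∈ Finset.Ico 1 n, d (u i) (u (p i)) := by
      apply Finset.sum_congr rfl
      intro i hi
      obtain ⟨h1, h2⟩ := Finset.mem_Ico.mp hi
      have hpi : p i < n := lt_trans (hpar i h1 h2) h2
      rw [hu'lt i h2, hp']
      simp only [if_pos h2]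
      rw [hu'lt (p i) hpi]
    have hsecond : ∑ i ∈ Finset.Ico n (n + m), d (u' i) (u' (p' i)) = M := by
      rw [Finset.sum_Ico_eq_sum_range]
      simp only [Nat.add_sub_cancel_left]
      rw [hMsum]
      apply Finset.sum_congr rfl
      intro j hj
      have hj' : j < m := Finset.mem_range.mp hj
      have h1 : u' (n + j) = ys.getD j a0 := by
        rw [hu'ge (n + j) (by omega)]
        congr 1
        omega
      have h2 : p' (n + j) = idx (ys.getD j a0) := by
        rw [hp']
        simp only [if_neg (by omega : ¬ n + j < n)]
        congr 2
        omega
      rw [h1, h2, hu'lt _ (hidxlt _), hidxval]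
    have : mst d xs ≤ 2 * ((∑ i ∈ Finset.Ico 1 n, d (u i) (u (p i))) + M) := by
      calc mst d xs ≤ pathWeight d l := hmst_le
        _ ≤ 2 * ∑ i ∈ Finset.Ico 1 (n + m), d (u' i) (u' (p' i)) := hlw
        _ = 2 * ((∑ i ∈ Finset.Ico 1 n, d (u i) (u (p i))) + M) := by
            rw [hsplit, hfirst, hsecond]
    exact this
  -- conclude via the infimum
  have hxne' : x.toList ≠ [] := by
    intro h
    have := Finset.toList_toFinset x
    rw [h] at this
    exact (Finset.nonempty_iff_ne_empty.mp ⟨a0, ha0⟩) (by simpa using this.symm)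
  have hmem := pw_mem_mstWeights d hsymm x.toList (Finset.nodup_toList x) hxne'
  rw [Finset.toList_toFinset] at hmem
  have hnonemp : (mstWeights d x).Nonempty := ⟨_, hmem⟩
  have hfinal : mst d xs / 2 - M ≤ mst d x := by
    apply le_csInf hnonemp
    intro w hw
    have := key w hw
    linarith
  rw [ge_iff_le]
  linarith
end

section
/- Let (V, F) be a matroid. For any two bases x and y of V, there is a bijection φ : x \ y → y \ x such that for every u ∈ x \ y, the set (x \ {u}) ∪ {φ(u)} is independent (hence a basis). -/
theorem matroid_exchange_bijection {α : Type*} [DecidableEq α] [Fintype α]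
    (Indep : Finset α → Prop)
    (hempty : Indep ∅)
    (hdown : ∀ X Y : Finset α, X ⊆ Y → Indep Y → Indep X)
    (haug : ∀ X Y : Finset α, Indep X → Indep Y → Y.card < X.card →
      ∃ v ∈ X \ Y, Indep (insert v Y))
    (x y : Finset α)
    (hx : Indep x ∧ ∀ z : Finset α, Indep z → x ⊆ z → x = z)
    (hy : Indep y ∧ ∀ z : Finset α, Indep z → y ⊆ z → y = z) :
    ∃ φ : α → α, Set.BijOn φ ↑(x \ y) ↑(y \ x) ∧
      ∀ u ∈ x \ y, Indep (insert (φ u) (x.erase u)) := by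
  classical
  obtain ⟨hxi, hxmax⟩ := hx
  obtain ⟨hyi, hymax⟩ := hy
  -- bases have equal cardinality
  have hcard : x.card = y.card := by
    by_contra h
    rcases Nat.lt_or_ge x.card y.card with hlt | hge
    · obtain ⟨v, hv, hvi⟩ := haug y x hyi hxi hlt
      rw [Finset.mem_sdiff] at hv
      exact hv.2 ((hxmax _ hvi (Finset.subset_insert _ _)) ▸ Finset.mem_insert_self v x)
    · rcases lt_or_eq_of_le hge with hlt | he
      · obtain ⟨v, hv, hvi⟩ := haug x y hxi hyi hlt
        rw [Finset.mem_sdiff] at hv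
        exact hv.2 ((hymax _ hvi (Finset.subset_insert _ _)) ▸ Finset.mem_insert_self v y)
      · exact h he.symm
  -- augment any independent subset of `insert w x` to one of full size
  have haux : ∀ (w : α), w ∉ x → ∀ n (I : Finset α), Indep I → I ⊆ insert w x →
      x.card ≤ I.card + n → ∃ D, I ⊆ D ∧ D ⊆ insert w x ∧ Indep D ∧ D.card = x.card := by
    intro w hw n
    induction n with
    | zero =>
      intro I hI hIsub hle
      refine ⟨I, Finset.Subset.refl _, hIsub, hI, le_antisymm ?_ (by simpa using hle)⟩
      by_contra h
      obtain ⟨v, hv, hvi⟩ := haug I x hI hxi (Nat.lt_of_not_le h)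
      rw [Finset.mem_sdiff] at hv
      exact hv.2 ((hxmax _ hvi (Finset.subset_insert _ _)) ▸ Finset.mem_insert_self v x)
    | succ n ih =>
      intro I hI hIsub hle
      rcases le_or_gt x.card I.card with hge | hlt
      · exact ih I hI hIsub (le_add_right hge)
      · obtain ⟨v, hv, hvi⟩ := haug x I hxi hI hlt
        rw [Finset.mem_sdiff] at hv
        obtain ⟨D, hD1, hD2, hD3, hD4⟩ := ih (insert v I) hvi
          (Finset.insert_subset (Finset.mem_insert_of_mem hv.1) hIsub)
          (by rw [Finset.card_insert_of_notMem hv.2]; omega)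
        exact ⟨D, (Finset.subset_insert _ _).trans hD1, hD2, hD3, hD4⟩
  -- the neighborhood finsets
  set t : α → Finset α := fun u => (y \ x).filter (fun v => Indep (insert v (x.erase u))) with ht
  -- Hall's condition
  have hhall : ∀ S : Finset α, S ⊆ x \ y → S.card ≤ (S.biUnion t).card := by
    intro S hS
    set N := S.biUnion t with hN
    set A := (x \ S) ∪ N with hA
    -- choose a maximum-cardinality independent subset of A containing x \ S
    have hxS : Indep (x \ S) := hdown _ _ (Finset.sdiff_subset) hxi
    have hfam : ((A.powerset.filter (fun B => Indep B ∧ x \ S ⊆ B))).Nonempty := by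
      refine ⟨x \ S, ?_⟩
      simp only [Finset.mem_filter, Finset.mem_powerset]
      exact ⟨Finset.subset_union_left, hxS, Finset.Subset.refl _⟩
    obtain ⟨B, hBmem, hBmax⟩ := Finset.exists_max_image _ Finset.card hfam
    simp only [Finset.mem_filter, Finset.mem_powerset] at hBmem
    obtain ⟨hBA, hBi, hBsub⟩ := hBmem
    -- B has full cardinality
    have hBcard : x.card ≤ B.card := by
      by_contra h
      obtain ⟨w, hw, hwi⟩ := haug y B hyi hBi (by omega)
      rw [Finset.mem_sdiff] at hw
      have hwx : w ∉ x := by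
        intro hwx
        have : w ∈ x \ S := by
          rw [Finset.mem_sdiff]
          exact ⟨hwx, fun hwS => (Finset.mem_sdiff.mp (hS hwS)).2 hw.1⟩
        exact hw.2 (hBsub this)
      have hwA : w ∉ A := by
        intro hwA
        have := hBmax (insert w B) (by
          simp only [Finset.mem_filter, Finset.mem_powerset]
          exact ⟨Finset.insert_subset hwA hBA, hwi, hBsub.trans (Finset.subset_insert _ _)⟩)
        rw [Finset.card_insert_of_notMem hw.2] at this
        omega
      -- so w ∈ (y \ x) \ N; derive contradiction via haux
      have hwN : w ∉ N := fun h => hwA (Finset.mem_union_right _ h)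
      have hIi : Indep (insert w (x \ S)) :=
        hdown _ _ (Finset.insert_subset_insert _ hBsub) hwi
      obtain ⟨D, hD1, hD2, hD3, hD4⟩ := haux w hwx (x.card) (insert w (x \ S)) hIi
        (Finset.insert_subset_insert _ Finset.sdiff_subset) (by omega)
      -- D = insert w (x.erase u₀) for some u₀ ∈ S
      have hwD : w ∈ D := hD1 (Finset.mem_insert_self _ _)
      have hcard1 : ((insert w x) \ D).card = 1 := by
        rw [Finset.card_sdiff_of_subset hD2, Finset.card_insert_of_notMem hwx, hD4]
        omega
      obtain ⟨u₀, hu₀⟩ := Finset.card_eq_one.mp hcard1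
      have hu₀mem : u₀ ∈ insert w x ∧ u₀ ∉ D := by
        have := hu₀ ▸ Finset.mem_singleton_self u₀
        rwa [Finset.mem_sdiff] at this
      have hu₀x : u₀ ∈ x := by
        rcases Finset.mem_insert.mp hu₀mem.1 with h | h
        · exact absurd (h ▸ hwD) hu₀mem.2
        · exact h
      have hu₀S : u₀ ∈ S := by
        by_contra h
        exact hu₀mem.2 (hD1 (Finset.mem_insert_of_mem (Finset.mem_sdiff.mpr ⟨hu₀x, h⟩)))
      have hDeq : D = insert w (x.erase u₀) := by
        apply Finset.eq_of_subset_of_card_le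
        · intro a ha
          have hains : a ∈ insert w x := hD2 ha
          rcases Finset.mem_insert.mp hains with h | h
          · exact h ▸ Finset.mem_insert_self _ _
          · refine Finset.mem_insert_of_mem (Finset.mem_erase.mpr ⟨?_, h⟩)
            rintro rfl
            exact hu₀mem.2 ha
        · rw [Finset.card_insert_of_notMem (fun h => hwx (Finset.erase_subset _ _ h)),
            Finset.card_erase_of_mem hu₀x, hD4]
          have : 1 ≤ x.card := Finset.card_pos.mpr ⟨u₀, hu₀x⟩
          omega
      have : w ∈ N := by
        rw [hN]
        refine Finset.mem_biUnion.mpr ⟨u₀, hu₀S, ?_⟩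
        rw [ht]
        simp only [Finset.mem_filter]
        exact ⟨Finset.mem_sdiff.mpr ⟨hw.1, hwx⟩, hDeq ▸ hD3⟩
      exact hwN this
    have hAcard : B.card ≤ (x \ S).card + N.card :=
      (Finset.card_le_card hBA).trans (Finset.card_union_le _ _)
    have hSsub : S ⊆ x := fun a ha => (Finset.mem_sdiff.mp (hS ha)).1
    rw [Finset.card_sdiff_of_subset hSsub] at hAcard
    have hSx : S.card ≤ x.card := Finset.card_le_card hSsub
    omega
  -- apply Hall's theorem on the subtype
  have hhall' : ∀ s : Finset {a // a ∈ x \ y}, s.card ≤ (s.biUnion (fun u => t u.1)).card := by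
    intro s
    have h1 : s.biUnion (fun u => t u.1) = (s.image Subtype.val).biUnion t := by
      ext a; simp [Finset.mem_biUnion]
    have h2 : (s.image Subtype.val).card = s.card :=
      Finset.card_image_of_injective _ Subtype.val_injective
    rw [h1, ← h2]
    exact hhall _ (fun a ha => by
      obtain ⟨⟨b, hb⟩, _, rfl⟩ := Finset.mem_image.mp ha; exact hb)
  obtain ⟨f, hfinj, hft⟩ :=
    (Finset.all_card_le_biUnion_card_iff_exists_injective (fun u : {a // a ∈ x \ y} => t u.1)).mp
      hhall'
  set φ : α → α := fun a => if h : a ∈ x \ y then f ⟨a, h⟩ else a with hφ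
  have hφmem : ∀ a (h : a ∈ x \ y), φ a ∈ t a := by
    intro a h
    simp only [hφ, dif_pos h]
    exact hft ⟨a, h⟩
  have hmapsto : ∀ a ∈ x \ y, φ a ∈ y \ x := by
    intro a ha
    have := hφmem a ha
    rw [ht, Finset.mem_filter] at this
    exact this.1
  have hinj : Set.InjOn φ ↑(x \ y) := by
    intro a ha b hb hab
    rw [Finset.mem_coe] at ha hb
    simp only [hφ, dif_pos ha, dif_pos hb] at hab
    exact congrArg Subtype.val (hfinj hab)
  have himg : (x \ y).image φ = y \ x := by
    apply Finset.eq_of_subset_of_card_le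
    · intro a ha
      obtain ⟨b, hb, rfl⟩ := Finset.mem_image.mp ha
      exact hmapsto b hb
    · rw [Finset.card_image_of_injOn (by simpa using hinj)]
      have h1 := Finset.card_sdiff_add_card_inter x y
      have h2 := Finset.card_sdiff_add_card_inter y x
      rw [Finset.inter_comm y x] at h2
      omega
  refine ⟨φ, ⟨?_, hinj, ?_⟩, ?_⟩
  · intro a ha
    rw [Finset.mem_coe] at ha
    exact Finset.mem_coe.mpr (hmapsto a ha)
  · intro a ha
    rw [Finset.mem_coe, ← himg] at ha
    obtain ⟨b, hb, rfl⟩ := Finset.mem_image.mp ha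
    exact ⟨b, Finset.mem_coe.mpr hb, rfl⟩
  · intro u hu
    have := hφmem u hu
    rw [ht, Finset.mem_filter] at this
    exact this.2
end

section
/- Let (V, F) be a matroid, f : 2^V → ℝ≥0 monotone submodular with f(∅)=0, and x, x* two bases with x \ x* = {u_1,…,u_m}, x* \ x = {v_1,…,v_m} paired by an exchange bijection φ(u_i)=v_i (so each x \ {u_i} ∪ {v_i} is a basis). Then Σ_{i=1}^{m} f(x \ {u_i} ∪ {v_i}) ≥ (m − 2)·f(x) + f(x*). -/
private lemma aux_insert_telescope {α : Type*} [DecidableEq α]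
    (f : Finset α → ℝ)
    (hsub : ∀ X Y : Finset α, f X + f Y ≥ f (X ∪ Y) + f (X ∩ Y))
    (x : Finset α) {m : ℕ} (v : Fin m → α) (hvinj : Function.Injective v)
    (hv : ∀ i, v i ∉ x) (S : Finset (Fin m)) :
    f (x ∪ S.image v) - f x ≤ ∑ i ∈ S, (f (insert (v i) x) - f x) := by
  induction S using Finset.induction with
  | empty => simp
  | @insert j S hj ih =>
    have hnot : v j ∉ x ∪ S.image v := by
      simp only [Finset.mem_union, Finset.mem_image, not_or, not_exists, not_and]
      exact ⟨hv j, fun i hi h => hj (by rwa [hvinj h] at hi)⟩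
    have h1 : (insert (v j) x) ∪ (x ∪ S.image v) = x ∪ (insert j S).image v := by
      rw [Finset.image_insert]
      ext a
      simp only [Finset.mem_union, Finset.mem_insert]
      tauto
    have h2 : (insert (v j) x) ∩ (x ∪ S.image v) = x := by
      ext a
      simp only [Finset.mem_inter, Finset.mem_insert, Finset.mem_union, Finset.mem_image]
      constructor
      · rintro ⟨h | ha, hb⟩
        · subst h
          exact absurd (by simpa [Finset.mem_union] using hb) hnot
        · exact ha
      · exact fun ha => ⟨Or.inr ha, Or.inl ha⟩
    have := hsub (insert (v j) x) (x ∪ S.image v)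
    rw [h1, h2] at this
    rw [Finset.sum_insert hj]
    linarith

private lemma aux_erase_telescope {α : Type*} [DecidableEq α]
    (f : Finset α → ℝ)
    (hsub : ∀ X Y : Finset α, f X + f Y ≥ f (X ∪ Y) + f (X ∩ Y))
    (x : Finset α) {m : ℕ} (u : Fin m → α) (huinj : Function.Injective u)
    (hu : ∀ i, u i ∈ x) (S : Finset (Fin m)) :
    ∑ i ∈ S, (f x - f (x.erase (u i))) ≤ f x - f (x \ S.image u) := by
  induction S using Finset.induction with
  | empty => simp
  | @insert j S hj ih =>
    have hnot : u j ∉ S.image u := by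
      simp only [Finset.mem_image, not_exists, not_and]
      exact fun i hi h => hj (by rwa [huinj h] at hi)
    have h1 : (x \ S.image u) ∪ (x.erase (u j)) = x := by
      ext a
      simp only [Finset.mem_union, Finset.mem_sdiff, Finset.mem_erase]
      constructor
      · rintro (⟨ha, _⟩ | ⟨_, ha⟩) <;> exact ha
      · intro ha
        by_cases h : a = u j
        · exact Or.inl ⟨ha, h ▸ hnot⟩
        · exact Or.inr ⟨h, ha⟩
    have h2 : (x \ S.image u) ∩ (x.erase (u j)) = x \ (insert j S).image u := by
      ext a
      simp only [Finset.mem_inter, Finset.mem_sdiff, Finset.mem_erase,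
        Finset.image_insert, Finset.mem_insert, not_or]
      constructor
      · rintro ⟨⟨ha, h2⟩, h3, _⟩
        exact ⟨ha, h3, h2⟩
      · rintro ⟨ha, h3, h2⟩
        exact ⟨⟨ha, h2⟩, h3, ha⟩
    have := hsub (x \ S.image u) (x.erase (u j))
    rw [h1, h2] at this
    rw [Finset.sum_insert hj]
    linarith

theorem exchange_sum_quality_bound {α : Type*} [DecidableEq α] [Fintype α]
    (Indep : Finset α → Prop)
    (hiempty : Indep ∅)
    (hdown : ∀ X Y : Finset α, X ⊆ Y → Indep Y → Indep X)
    (haug : ∀ X Y : Finset α, Indep X → Indep Y → Y.card < X.card →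
      ∃ v ∈ X \ Y, Indep (insert v Y))
    (f : Finset α → ℝ)
    (hmono : ∀ X Y : Finset α, X ⊆ Y → f X ≤ f Y)
    (hsub : ∀ X Y : Finset α, f X + f Y ≥ f (X ∪ Y) + f (X ∩ Y))
    (hnonneg : ∀ X : Finset α, 0 ≤ f X)
    (hempty : f ∅ = 0)
    (x xs : Finset α)
    (hx : Indep x ∧ ∀ z : Finset α, Indep z → x ⊆ z → x = z)
    (hxs : Indep xs ∧ ∀ z : Finset α, Indep z → xs ⊆ z → xs = z)
    (m : ℕ) (u v : Fin m → α)
    (huinj : Function.Injective u) (hvinj : Function.Injective v)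
    (huimg : Finset.image u Finset.univ = x \ xs)
    (hvimg : Finset.image v Finset.univ = xs \ x)
    (hswap : ∀ i : Fin m, Indep (insert (v i) (x.erase (u i))) ∧
      ∀ z : Finset α, Indep z → insert (v i) (x.erase (u i)) ⊆ z →
        insert (v i) (x.erase (u i)) = z) :
    ∑ i : Fin m, f (insert (v i) (x.erase (u i))) ≥ ((m : ℝ) - 2) * f x + f xs := by
  have hu : ∀ i, u i ∈ x := by
    intro i
    have : u i ∈ Finset.image u Finset.univ := Finset.mem_image_of_mem u (Finset.mem_univ i)
    rw [huimg, Finset.mem_sdiff] at this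
    exact this.1
  have hv : ∀ i, v i ∉ x := by
    intro i
    have : v i ∈ Finset.image v Finset.univ := Finset.mem_image_of_mem v (Finset.mem_univ i)
    rw [hvimg, Finset.mem_sdiff] at this
    exact this.2
  -- per-index submodularity
  have key : ∀ i : Fin m, f (insert (v i) x) + f (x.erase (u i)) - f x
      ≤ f (insert (v i) (x.erase (u i))) := by
    intro i
    have h1 : (insert (v i) (x.erase (u i))) ∪ x = insert (v i) x := by
      ext a
      simp only [Finset.mem_union, Finset.mem_insert, Finset.mem_erase]
      constructor
      · tauto
      · rintro (h | h)
        · exact Or.inl (Or.inl h)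
        · exact Or.inr h
    have h2 : (insert (v i) (x.erase (u i))) ∩ x = x.erase (u i) := by
      ext a
      simp only [Finset.mem_inter, Finset.mem_insert, Finset.mem_erase]
      constructor
      · rintro ⟨h | ⟨h, _⟩, hb⟩
        · subst h
          exact absurd hb (hv i)
        · exact ⟨h, hb⟩
      · exact fun ⟨h, ha⟩ => ⟨Or.inr ⟨h, ha⟩, ha⟩
    have := hsub (insert (v i) (x.erase (u i))) x
    rw [h1, h2] at this
    linarith
  have A : f xs - f x ≤ ∑ i : Fin m, (f (insert (v i) x) - f x) := by
    have h1 := aux_insert_telescope f hsub x v hvinj hv Finset.univ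
    have hsubset : xs ⊆ x ∪ Finset.univ.image v := by
      intro a ha
      rw [hvimg, Finset.mem_union, Finset.mem_sdiff]
      by_cases h : a ∈ x
      · exact Or.inl h
      · exact Or.inr ⟨ha, h⟩
    have := hmono xs (x ∪ Finset.univ.image v) hsubset
    linarith
  have B : ∑ i : Fin m, (f x - f (x.erase (u i))) ≤ f x := by
    have h1 := aux_erase_telescope f hsub x u huinj hu Finset.univ
    have := hnonneg (x \ Finset.univ.image u)
    linarith
  have C : ∑ i : Fin m, (f (insert (v i) x) + f (x.erase (u i)) - f x)
      ≤ ∑ i : Fin m, f (insert (v i) (x.erase (u i))) :=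
    Finset.sum_le_sum fun i _ => key i
  have D : ∑ i : Fin m, (f (insert (v i) x) + f (x.erase (u i)) - f x)
      = ∑ i : Fin m, (f (insert (v i) x) - f x)
        - ∑ i : Fin m, (f x - f (x.erase (u i))) + (m : ℝ) * f x := by
    simp only [Finset.sum_sub_distrib, Finset.sum_add_distrib, Finset.sum_const,
      Finset.card_univ, Fintype.card_fin, nsmul_eq_mul]
    ring
  linarith
end

section
/- Let d be a metric on V, k ≥ 2, x* a subset of size k, and x a nonempty subset of x* with |x| = k − 1 (so |x* \ x| = 1). Then div(x* \ x, x) ≥ (1/(k−1))·div(x*), where div is the sum-diversity and div(X,Y) the sum of cross distances. -/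
theorem cross_div_single_missing {α : Type*} [DecidableEq α]
    (d : α → α → ℝ)
    (hsymm : ∀ u v, d u v = d v u)
    (hnonneg : ∀ u v, 0 ≤ d u v)
    (hself : ∀ v, d v v = 0)
    (htri : ∀ u v w, d u w ≤ d u v + d v w)
    (k : ℕ) (hk : 2 ≤ k)
    (xs x : Finset α) (hxs : xs.card = k)
    (hsub : x ⊆ xs) (hne : x.Nonempty) (hx : x.card = k - 1) :
    crossDiv d (xs \ x) x ≥ (1 / ((k : ℝ) - 1)) * sumDiv d xs := by
  classical
  have hcard : (xs \ x).card = 1 := by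
    rw [Finset.card_sdiff_of_subset hsub, hxs, hx]; omega
  obtain ⟨w, hw⟩ := Finset.card_eq_one.mp hcard
  have hwmem : w ∈ xs \ x := hw ▸ Finset.mem_singleton_self w
  have hwx : w ∉ x := (Finset.mem_sdiff.mp hwmem).2
  have hxsd : xs = insert w x := by
    have h1 : x ∪ xs \ x = xs := Finset.union_sdiff_of_subset hsub
    rw [← h1, hw]
    ext a; simp [or_comm]
  set S := ∑ v ∈ x, d w v with hSdef
  have hcross : crossDiv d (xs \ x) x = S := by
    rw [hw]; simp [crossDiv]; rfl
  have hSsym : ∑ u ∈ x, d u w = S :=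
    Finset.sum_congr rfl (fun u _ => hsymm u w)
  set T := ∑ u ∈ x, ∑ v ∈ x, d u v with hTdef
  have hSnonneg : 0 ≤ S := Finset.sum_nonneg fun v _ => hnonneg w v
  have hkr : (1:ℝ) ≤ (k:ℝ) - 1 := by
    have : (2:ℝ) ≤ (k:ℝ) := by exact_mod_cast hk
    linarith
  -- bound T
  have hT : T ≤ (2*(k:ℝ) - 4) * S := by
    have hper : ∀ u ∈ x, ∑ v ∈ x, d u v ≤ ((k:ℝ) - 3) * d u w + S := by
      intro u hu
      rw [← Finset.add_sum_erase x (d u) hu, hself]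
      have h1 : ∑ v ∈ x.erase u, d u v ≤ ∑ v ∈ x.erase u, (d u w + d w v) :=
        Finset.sum_le_sum fun v _ => htri u w v
      have h2 : ∑ v ∈ x.erase u, (d u w + d w v)
          = ((x.erase u).card : ℝ) * d u w + ∑ v ∈ x.erase u, d w v := by
        rw [Finset.sum_add_distrib, Finset.sum_const, nsmul_eq_mul]
      have h3 : ∑ v ∈ x.erase u, d w v = S - d w u :=
        Finset.sum_erase_eq_sub hu
      have h4 : ((x.erase u).card : ℝ) = (k:ℝ) - 2 := by
        rw [Finset.card_erase_of_mem hu, hx]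
        have : k - 1 - 1 = k - 2 := by omega
        rw [this]
        have : 2 ≤ k := hk
        push_cast [Nat.cast_sub this]
        ring
      rw [h2, h3, h4] at h1
      have := hsymm w u
      linarith
    have := Finset.sum_le_sum hper
    rw [Finset.sum_add_distrib, ← Finset.mul_sum, hSsym, Finset.sum_const,
      nsmul_eq_mul, hx] at this
    have hcard' : ((k - 1 : ℕ) : ℝ) = (k:ℝ) - 1 := by
      push_cast [Nat.cast_sub (by omega : 1 ≤ k)]; ring
    rw [hcard'] at this
    calc T ≤ ((k:ℝ) - 3) * S + ((k:ℝ) - 1) * S := this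
      _ = (2*(k:ℝ) - 4) * S := by ring
  -- compute sumDiv xs
  have hsum : sumDiv d xs = (T + 2 * S) / 2 := by
    rw [sumDiv, hxsd]
    rw [Finset.sum_insert hwx]
    have hinner : ∀ u ∈ x, ∑ v ∈ insert w x, d u v = d u w + ∑ v ∈ x, d u v := by
      intro u hu; rw [Finset.sum_insert hwx]
    rw [Finset.sum_insert hwx, hself, Finset.sum_congr rfl hinner,
      Finset.sum_add_distrib, hSsym]
    ring_nf
    rw [hSdef, hTdef]; ring
  rw [hcross, hsum, ge_iff_le, one_div, inv_mul_eq_div, div_le_iff₀ (by linarith : (0:ℝ) < (k:ℝ) - 1)]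
  nlinarith [hT, hSnonneg, hkr]
end
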